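/- Let N ≥ d_t = dim(P_t(S^d)) and let X_N ⊂ S^d be a fundamental system for P_t(S^d). Define D_{N,t}(X_N) = (ω_d²/N²) C_t(X_N)^T C_t(X_N). Then 0 ≤ D_{N,t}(X_N) ≤ 4(N−1)M(d+1,t)², and X_N is a spherical t-design if and only if D_{N,t}(X_N) = 0. -/

import Mathlib

open MeasureTheory Finset Matrix

noncomputable section

/-- Euclidean space `ℝ^{d+1}`. -/
abbrev Esp (d : ℕ) := EuclideanSpace ℝ (Fin (d + 1))

/-- The unit sphere `S^d ⊂ ℝ^{d+1}`. -/
abbrev Sd (d : ℕ) := Metric.sphere (0 : Esp d) 1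

/-- The surface measure on `S^d`. -/
def sphMeasure (d : ℕ) : Measure (Sd d) := (volume : Measure (Esp d)).toSphere

/-- The surface area `ω_d` of `S^d`. -/
def omega (d : ℕ) : ℝ := (sphMeasure d Set.univ).toReal

/-- `f : S^d → ℝ` is the restriction of a polynomial of degree at most `t`. -/
def IsPt (d t : ℕ) (f : Sd d → ℝ) : Prop :=
  ∃ P : MvPolynomial (Fin (d + 1)) ℝ, P.totalDegree ≤ t ∧
    ∀ x : Sd d, f x = MvPolynomial.eval (fun i => (x : Esp d) i) P

/-- `X` is a spherical `t`-design. -/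
def IsDesign (d t N : ℕ) (X : Fin N → Sd d) : Prop :=
  ∀ f : Sd d → ℝ, IsPt d t f →
    (∑ j, f (X j)) / (N : ℝ) = (∫ x, f x ∂(sphMeasure d)) / omega d

/-- `M(d,ℓ)`, the dimension of the space of degree-`ℓ` spherical harmonics on `S^d`. -/
def Mdim (d ℓ : ℕ) : ℕ := (2 * ℓ + d - 1) * Nat.factorial (ℓ + d - 2) /
    (Nat.factorial (d - 1) * Nat.factorial ℓ)

/-- `X` is a fundamental system for `P_t(S^d)`. -/
def IsFundamental (d t N : ℕ) (X : Fin N → Sd d) : Prop :=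
  ∀ f : Sd d → ℝ, IsPt d t f → (∀ j, f (X j) = 0) → ∀ x, f x = 0

/-- The hypotheses that `Y ℓ k`, `k < M(d,ℓ)`, `ℓ ≤ t`, form an orthonormal basis of real
spherical harmonics for `P_t(S^d)`, with `Y 0 0` the constant `1/√ω_d`. -/
structure IsONBHarmonics (d t : ℕ) (Y : ℕ → ℕ → Sd d → ℝ) : Prop where
  poly : ∀ ℓ ≤ t, ∀ k < Mdim d ℓ, IsPt d ℓ (Y ℓ k)
  ortho : ∀ ℓ ≤ t, ∀ ℓ' ≤ t, ∀ k < Mdim d ℓ, ∀ k' < Mdim d ℓ',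
    ∫ x, Y ℓ k x * Y ℓ' k' x ∂(sphMeasure d) = if ℓ = ℓ' ∧ k = k' then 1 else 0
  span : ∀ f : Sd d → ℝ, IsPt d t f → ∃ c : ℕ → ℕ → ℝ,
    ∀ x, f x = ∑ ℓ ∈ range (t + 1), ∑ k ∈ range (Mdim d ℓ), c ℓ k * Y ℓ k x
  const : ∀ x, Y 0 0 x = 1 / Real.sqrt (omega d)

/-- Row index set for the matrix `Y_t`: pairs `(ℓ, k)` with `ℓ ≤ t`, `k < M(d,ℓ)`. -/
abbrev HIdx (d t : ℕ) := (ℓ : Fin (t + 1)) × Fin (Mdim d ℓ.1)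

/-- The spherical harmonic evaluation matrix `Y_t ∈ ℝ^{d_t × N}`. -/
def Ymat (d t N : ℕ) (Y : ℕ → ℕ → Sd d → ℝ) (X : Fin N → Sd d) :
    Matrix (HIdx d t) (Fin N) ℝ :=
  fun p j => Y p.1.1 p.2.1 (X j)

/-- The Gram matrix `G_t = Y_tᵀ Y_t`. -/
def Gmat (d t N : ℕ) (Y : ℕ → ℕ → Sd d → ℝ) (X : Fin N → Sd d) :
    Matrix (Fin N) (Fin N) ℝ :=
  (Ymat d t N Y X)ᵀ * Ymat d t N Y X

/-- The vector `C_t(X_N) ∈ ℝ^{N-1}`, `(C_t)_i = (G_t e)_1 - (G_t e)_{i+1}`. -/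
def Cvec (d t N : ℕ) (Y : ℕ → ℕ → Sd d → ℝ) (X : Fin N → Sd d) :
    Fin (N - 1) → ℝ :=
  fun i =>
    (Gmat d t N Y X).mulVec (fun _ => 1) ⟨0, by have := i.2; omega⟩ -
      (Gmat d t N Y X).mulVec (fun _ => 1) ⟨i.1 + 1, by have := i.2; omega⟩

/-- The nonnegative quantity `D_{N,t}(X_N) = (ω_d²/N²) C_t(X)ᵀ C_t(X)`. -/
def DNt (d t N : ℕ) (Y : ℕ → ℕ → Sd d → ℝ) (X : Fin N → Sd d) : ℝ :=
  (omega d) ^ 2 / (N : ℝ) ^ 2 * ∑ i, (Cvec d t N Y X i) ^ 2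

/-!
Let `Z_p` be the orthonormal basis and `K(x, y) = ∑_p Z_p(x) Z_p(y)` the reproducing kernel of
`P_t(S^d)`, so that `G_t = (K(x_j, x_m))_{j,m}`. Since `P_t(S^d)` and the surface measure are
invariant under the orthogonal group, which acts transitively on `S^d`, the reproducing property
forces `K(x, x) = d_t / ω_d` everywhere, and Cauchy–Schwarz gives `|K(x, y)| ≤ d_t / ω_d`. With
`d_t ≤ M(d+1,t)` this is the upper bound.

`D_{N,t}` vanishes iff `G_t e` is a constant vector. A design integrates every `Z_p` exactly, and
then `G_t e = (N / ω_d) e`. Conversely, if `G_t e = c e` and `1 = ∑_p a_p Z_p`, the polynomial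
`∑_p (∑_m Z_p(x_m) - c a_p) Z_p` vanishes on the fundamental system, hence everywhere, so the
point sums of the `Z_p` are proportional to their integrals.
-/

open scoped Pointwise

instance (d : ℕ) : IsFiniteMeasure (sphMeasure d) := by
  unfold sphMeasure; infer_instance

lemma omega_pos (d : ℕ) : 0 < omega d :=
  ENNReal.toReal_pos (Measure.measure_univ_ne_zero.mpr (by simp [sphMeasure]))
    (measure_ne_top _ _)

lemma Continuous.integrable_sphMeasure {d : ℕ} {f : Sd d → ℝ} (hf : Continuous f) :
    Integrable f (sphMeasure d) :=
  hf.integrable_of_hasCompactSupport (.of_compactSpace f)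

section Rotation

variable {d : ℕ}

def sphereMap (ρ : Esp d ≃ₗᵢ[ℝ] Esp d) (x : Sd d) : Sd d :=
  ⟨ρ x, by simp⟩

lemma continuous_sphereMap (ρ : Esp d ≃ₗᵢ[ℝ] Esp d) : Continuous (sphereMap ρ) := by
  unfold sphereMap; fun_prop

lemma exists_sphereMap_eq (x y : Sd d) : ∃ ρ : Esp d ≃ₗᵢ[ℝ] Esp d, sphereMap ρ x = y :=
  ⟨(ℝ ∙ ((x : Esp d) - y))ᗮ.reflection, Subtype.ext <| Submodule.reflection_sub <| by simp⟩

lemma image_val_preimage_sphereMap (ρ : Esp d ≃ₗᵢ[ℝ] Esp d) (s : Set (Sd d)) :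
    Subtype.val '' (sphereMap ρ ⁻¹' s) = ρ.symm '' (Subtype.val '' s) := by
  ext y
  constructor
  · rintro ⟨x, hx, rfl⟩
    exact ⟨ρ x, ⟨sphereMap ρ x, hx, rfl⟩, by simp⟩
  · rintro ⟨z, ⟨x, hx, rfl⟩, rfl⟩
    refine ⟨sphereMap ρ.symm x, ?_, rfl⟩
    simpa [sphereMap] using hx

-- `toSphere` measures `s` by the volume of the cone `(0, 1) • s`, and a linear isometry maps
-- cones to cones and preserves volume.
lemma map_sphereMap (ρ : Esp d ≃ₗᵢ[ℝ] Esp d) :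
    (sphMeasure d).map (sphereMap ρ) = sphMeasure d := by
  ext s hs
  have hpre := (continuous_sphereMap ρ).measurable hs
  have hsmul (B : Set (Esp d)) :
      Set.Ioo (0 : ℝ) 1 • ρ.symm '' B = ρ.symm '' (Set.Ioo (0 : ℝ) 1 • B) := by
    rw [← Set.image2_smul, ← Set.image2_smul]
    exact (Set.image_image2_distrib_right fun c v => ρ.symm.map_smul c v).symm
  rw [Measure.map_apply (continuous_sphereMap ρ).measurable hs, sphMeasure,
    Measure.toSphere_apply' _ hpre, Measure.toSphere_apply' _ hs, image_val_preimage_sphereMap,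
    hsmul, ρ.symm.image_eq_preimage_symm, LinearIsometryEquiv.symm_symm,
    ρ.measurePreserving.measure_preimage_emb ρ.toHomeomorph.measurableEmbedding]

lemma integral_comp_sphereMap (ρ : Esp d ≃ₗᵢ[ℝ] Esp d) {f : Sd d → ℝ}
    (hf : Continuous f) :
    ∫ x, f (sphereMap ρ x) ∂(sphMeasure d) = ∫ x, f x ∂(sphMeasure d) := by
  conv_rhs => rw [← map_sphereMap ρ]
  exact (integral_map (continuous_sphereMap ρ).aemeasurable hf.aestronglyMeasurable).symm

end Rotation

lemma MvPolynomial.totalDegree_bind₁_le {σ τ R : Type*} [CommSemiring R]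
    (g : σ → MvPolynomial τ R) (hg : ∀ i, (g i).totalDegree ≤ 1) (P : MvPolynomial σ R) :
    (bind₁ g P).totalDegree ≤ P.totalDegree := by
  conv_lhs => rw [P.as_sum, map_sum]
  refine (totalDegree_finsetSum _ _).trans (Finset.sup_le fun s hs => ?_)
  rw [bind₁_monomial]
  refine (totalDegree_mul _ _).trans ?_
  rw [totalDegree_C, zero_add]
  refine (totalDegree_finsetProd _ _).trans ?_
  calc ∑ i ∈ s.support, (g i ^ s i).totalDegree
      ≤ ∑ i ∈ s.support, s i := Finset.sum_le_sum fun i _ =>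
        (totalDegree_pow _ _).trans (by simpa using Nat.mul_le_mul_left (s i) (hg i))
    _ ≤ P.totalDegree := le_totalDegree hs

lemma LinearIsometryEquiv.euclideanSpace_apply_eq_sum {ι : Type*} [Fintype ι] [DecidableEq ι]
    (ρ : EuclideanSpace ℝ ι ≃ₗᵢ[ℝ] EuclideanSpace ℝ ι) (x : EuclideanSpace ℝ ι) (i : ι) :
    ρ x i = ∑ j, ρ (EuclideanSpace.single j 1) i * x j := by
  conv_lhs => rw [← (EuclideanSpace.basisFun ι ℝ).sum_repr x]
  simp [mul_comm]

namespace IsPt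

variable {d t : ℕ} {f : Sd d → ℝ}

lemma continuous (hf : IsPt d t f) : Continuous f := by
  obtain ⟨P, -, hP⟩ := hf
  rw [funext hP]
  exact (MvPolynomial.continuous_eval P).comp (by fun_prop)

lemma mono {t' : ℕ} (hf : IsPt d t f) (ht : t ≤ t') : IsPt d t' f :=
  let ⟨P, hP, hfP⟩ := hf; ⟨P, hP.trans ht, hfP⟩

lemma const (c : ℝ) : IsPt d t fun _ => c :=
  ⟨MvPolynomial.C c, by simp, by simp⟩

lemma sum_mul {ι : Type*} [Fintype ι] {Z : ι → Sd d → ℝ} (hZ : ∀ i, IsPt d t (Z i))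
    (c : ι → ℝ) : IsPt d t fun x => ∑ i, c i * Z i x := by
  choose P hPdeg hP using hZ
  refine ⟨∑ i, MvPolynomial.C (c i) * P i,
    (MvPolynomial.totalDegree_finsetSum _ _).trans (Finset.sup_le fun i _ => ?_),
    fun x => by simp [hP]⟩
  exact (MvPolynomial.totalDegree_mul _ _).trans (by simpa using hPdeg i)

lemma comp_sphereMap (hf : IsPt d t f) (ρ : Esp d ≃ₗᵢ[ℝ] Esp d) :
    IsPt d t fun x => f (sphereMap ρ x) := by
  obtain ⟨P, hPdeg, hP⟩ := hf
  set g : Fin (d + 1) → MvPolynomial (Fin (d + 1)) ℝ :=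
    fun i => ∑ j, MvPolynomial.C (ρ (EuclideanSpace.single j 1) i) * MvPolynomial.X j
  have hg : ∀ i, (g i).totalDegree ≤ 1 := fun i =>
    (MvPolynomial.totalDegree_finsetSum _ _).trans <| Finset.sup_le fun j _ =>
      (MvPolynomial.totalDegree_mul _ _).trans (by simp)
  refine ⟨MvPolynomial.bind₁ g P, (MvPolynomial.totalDegree_bind₁_le g hg P).trans hPdeg,
    fun x => ?_⟩
  have hcoord : (fun i => (sphereMap ρ x : Esp d) i) =
      fun i => MvPolynomial.eval (fun j => (x : Esp d) j) (g i) := by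
    ext i
    rw [sphereMap, LinearIsometryEquiv.euclideanSpace_apply_eq_sum]
    simp [g]
  dsimp only
  rw [hP (sphereMap ρ x), hcoord]
  exact (MvPolynomial.eval₂Hom_bind₁ (RingHom.id ℝ) _ g P).symm

end IsPt

lemma IsFundamental.pos {d t N : ℕ} {X : Fin N → Sd d} (hX : IsFundamental d t N X) : 0 < N := by
  refine Nat.pos_of_ne_zero fun hN => ?_
  subst hN
  simpa using hX _ (IsPt.const 1) finZeroElim ⟨EuclideanSpace.single 0 1, by simp⟩

structure IsPtOrthonormalBasis (d t : ℕ) {ι : Type*} [Fintype ι] [DecidableEq ι]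
    (Z : ι → Sd d → ℝ) : Prop where
  isPt : ∀ i, IsPt d t (Z i)
  integral_mul : ∀ i j, ∫ x, Z i x * Z j x ∂(sphMeasure d) = if i = j then 1 else 0
  exists_coeff : ∀ f, IsPt d t f → ∃ c : ι → ℝ, ∀ x, f x = ∑ i, c i * Z i x

namespace IsPtOrthonormalBasis

variable {d t N : ℕ} {ι : Type*} [Fintype ι] [DecidableEq ι] {Z : ι → Sd d → ℝ}
  (hZ : IsPtOrthonormalBasis d t Z) {X : Fin N → Sd d}
include hZ

lemma integral_sum_mul_mul (c : ι → ℝ) (j : ι) :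
    ∫ x, (∑ i, c i * Z i x) * Z j x ∂(sphMeasure d) = c j := by
  have hint : ∀ i, Integrable (fun x => Z i x * Z j x) (sphMeasure d) := fun i =>
    ((hZ.isPt i).continuous.mul (hZ.isPt j).continuous).integrable_sphMeasure
  simp_rw [Finset.sum_mul, mul_assoc]
  rw [integral_finsetSum _ fun i _ => (hint i).const_mul (c i)]
  simp [integral_const_mul, hZ.integral_mul]

lemma integral_sum_mul_sum (b c : ι → ℝ) :
    ∫ x, (∑ i, b i * Z i x) * (∑ i, c i * Z i x) ∂(sphMeasure d) = ∑ i, b i * c i := by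
  have hint : ∀ j, Integrable (fun x => (∑ i, b i * Z i x) * Z j x) (sphMeasure d) := fun j =>
    ((IsPt.sum_mul hZ.isPt b).continuous.mul (hZ.isPt j).continuous).integrable_sphMeasure
  have hexpand : ∀ x, (∑ i, b i * Z i x) * (∑ i, c i * Z i x) =
      ∑ j, c j * ((∑ i, b i * Z i x) * Z j x) := fun x => by
    rw [Finset.mul_sum]; exact Finset.sum_congr rfl fun j _ => by ring
  simp_rw [hexpand]
  rw [integral_finsetSum _ fun j _ => (hint j).const_mul (c j)]
  simp only [integral_const_mul, hZ.integral_sum_mul_mul]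
  exact Finset.sum_congr rfl fun i _ => mul_comm _ _

lemma coeff_eq_zero (c : ι → ℝ) (h : ∀ x, ∑ i, c i * Z i x = 0) (j : ι) : c j = 0 := by
  simpa [h] using (hZ.integral_sum_mul_mul c j).symm

lemma integral_eq_coeff_one {a : ι → ℝ} (ha : ∀ x, ∑ i, a i * Z i x = 1) (j : ι) :
    ∫ x, Z j x ∂(sphMeasure d) = a j := by
  simpa [ha] using hZ.integral_sum_mul_mul a j

lemma sum_mul_self_coeff_one {a : ι → ℝ} (ha : ∀ x, ∑ i, a i * Z i x = 1) :
    ∑ i, a i * a i = omega d := by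
  simpa [ha, omega, Measure.real] using (hZ.integral_sum_mul_sum a a).symm

lemma sq_le_integral_sq_mul_sum_sq {f : Sd d → ℝ} (hf : IsPt d t f) (y : Sd d) :
    f y ^ 2 ≤ (∫ x, f x ^ 2 ∂(sphMeasure d)) * ∑ i, Z i y ^ 2 := by
  obtain ⟨c, hc⟩ := hZ.exists_coeff f hf
  have hnorm : ∫ x, f x ^ 2 ∂(sphMeasure d) = ∑ i, c i ^ 2 := by
    simp_rw [hc, sq, hZ.integral_sum_mul_sum]
  rw [hnorm, hc y]
  exact Finset.sum_mul_sq_le_sq_mul_sq _ _ _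

-- Apply `sq_le_integral_sq_mul_sum_sq` at `y` to the kernel section `K(x, ·)` precomposed with a
-- rotation taking `y` to `x`: it has norm `K(x, x)` and value `K(x, x)` at `y`.
lemma sum_sq_le_sum_sq (x y : Sd d) : ∑ i, Z i x ^ 2 ≤ ∑ i, Z i y ^ 2 := by
  obtain ⟨ρ, hρ⟩ := exists_sphereMap_eq y x
  have hk : IsPt d t fun z => ∑ i, Z i x * Z i z := IsPt.sum_mul hZ.isPt _
  have hnorm : ∫ z, (∑ i, Z i x * Z i (sphereMap ρ z)) ^ 2 ∂(sphMeasure d) =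
      ∑ i, Z i x ^ 2 := by
    rw [integral_comp_sphereMap ρ (f := fun z => (∑ i, Z i x * Z i z) ^ 2) (hk.continuous.pow 2)]
    simp_rw [sq, hZ.integral_sum_mul_sum]
  have hval : ∑ i, Z i x * Z i (sphereMap ρ y) = ∑ i, Z i x ^ 2 := by simp [hρ, sq]
  have hcs := hZ.sq_le_integral_sq_mul_sum_sq (hk.comp_sphereMap ρ) y
  rw [hnorm, hval] at hcs
  nlinarith [Finset.sum_nonneg fun i (_ : i ∈ univ) => sq_nonneg (Z i y)]

lemma sum_sq_eq (x : Sd d) : ∑ i, Z i x ^ 2 = Fintype.card ι / omega d := by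
  have hconst : (fun y => ∑ i, Z i y ^ 2) = fun _ => ∑ i, Z i x ^ 2 :=
    funext fun y => le_antisymm (hZ.sum_sq_le_sum_sq y x) (hZ.sum_sq_le_sum_sq x y)
  have hint : ∫ y, ∑ i, Z i y ^ 2 ∂(sphMeasure d) = Fintype.card ι := by
    rw [integral_finsetSum (f := fun i y => Z i y ^ 2) _ fun i _ =>
      ((hZ.isPt i).continuous.pow 2).integrable_sphMeasure]
    simp [sq, hZ.integral_mul]
  rw [hconst, integral_const, smul_eq_mul] at hint
  rw [eq_div_iff (omega_pos d).ne', ← hint, mul_comm]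
  rfl

lemma abs_sum_mul_le (x y : Sd d) : |∑ i, Z i x * Z i y| ≤ Fintype.card ι / omega d := by
  have hcs := Finset.sum_mul_sq_le_sq_mul_sq univ (fun i => Z i x) (fun i => Z i y)
  rw [hZ.sum_sq_eq, hZ.sum_sq_eq, ← sq] at hcs
  exact abs_le_of_sq_le_sq hcs (by have := omega_pos d; positivity)


lemma isDesign_iff :
    IsDesign d t N X ↔
      ∀ i, (∑ j, Z i (X j)) / N = (∫ x, Z i x ∂(sphMeasure d)) / omega d := by
  refine ⟨fun h i => h _ (hZ.isPt i), fun h f hf => ?_⟩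
  obtain ⟨c, hc⟩ := hZ.exists_coeff f hf
  have hsum : ∑ j, f (X j) = ∑ i, c i * ∑ j, Z i (X j) := by
    simp_rw [hc, Finset.mul_sum]
    exact Finset.sum_comm
  have hint : ∫ x, f x ∂(sphMeasure d) = ∑ i, c i * ∫ x, Z i x ∂(sphMeasure d) := by
    simp_rw [hc]
    rw [integral_finsetSum _ fun i _ =>
      ((hZ.isPt i).continuous.integrable_sphMeasure).const_mul (c i)]
    simp only [integral_const_mul]
  rw [hsum, hint, Finset.sum_div, Finset.sum_div]
  simp_rw [mul_div_assoc, h]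

lemma isDesign_iff_exists_forall_sum_eq (hX : IsFundamental d t N X) :
    IsDesign d t N X ↔ ∃ c, ∀ j, ∑ m, ∑ i, Z i (X j) * Z i (X m) = c := by
  obtain ⟨a, ha⟩ := hZ.exists_coeff _ (IsPt.const 1)
  replace ha : ∀ x, ∑ i, a i * Z i x = 1 := fun x => (ha x).symm
  set r : ι → ℝ := fun i => ∑ m, Z i (X m)
  have hrow : ∀ j, ∑ m, ∑ i, Z i (X j) * Z i (X m) = ∑ i, r i * Z i (X j) := fun j => by
    rw [Finset.sum_comm]
    simp_rw [r, Finset.sum_mul, mul_comm]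
  have hNsum : (N : ℝ) = ∑ i, a i * r i := by
    simp_rw [r, Finset.mul_sum]
    rw [Finset.sum_comm]
    simp [ha]
  have hNpos : (0 : ℝ) < N := by exact_mod_cast hX.pos
  have hω := omega_pos d
  rw [hZ.isDesign_iff]
  simp_rw [hZ.integral_eq_coeff_one ha, hrow]
  constructor
  · intro h
    refine ⟨N / omega d, fun j => ?_⟩
    have hr : ∀ i, r i = N / omega d * a i := fun i => by
      have := h i
      field_simp at this ⊢
      linarith
    simp_rw [hr, mul_assoc, ← Finset.mul_sum, ha, mul_one]
  · rintro ⟨c, hc⟩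
    have hvanish : ∀ x, ∑ i, (r i - c * a i) * Z i x = 0 :=
      hX _ (IsPt.sum_mul hZ.isPt _) fun j => by
        simp_rw [sub_mul, Finset.sum_sub_distrib, mul_assoc, ← Finset.mul_sum, ha, hc, mul_one,
          sub_self]
    have hr : ∀ i, r i = c * a i := fun i =>
      sub_eq_zero.mp (hZ.coeff_eq_zero (fun i => r i - c * a i) hvanish i)
    have hNc : (N : ℝ) = c * omega d := by
      rw [hNsum, ← hZ.sum_mul_self_coeff_one ha, Finset.mul_sum]
      simp_rw [hr]
      exact Finset.sum_congr rfl fun i _ => by ring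
    intro i
    have hc0 : c ≠ 0 := by rintro rfl; rw [zero_mul] at hNc; linarith
    change r i / N = _
    rw [hr i, hNc]
    field_simp

end IsPtOrthonormalBasis

lemma Mdim_succ_succ (a m : ℕ) :
    Mdim (a + 1) (m + 1) = (m + a + 1).choose a + (m + a).choose a := by
  have hfac₁ := Nat.add_choose_mul_factorial_mul_factorial (m + 1) a
  have hfac₂ := Nat.add_choose_mul_factorial_mul_factorial m a
  have hnum : (2 * (m + 1) + (a + 1) - 1) * (m + 1 + (a + 1) - 2).factorial =
      ((m + a + 1).choose a + (m + a).choose a) * (a.factorial * (m + 1).factorial) :=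
    calc (2 * (m + 1) + (a + 1) - 1) * (m + 1 + (a + 1) - 2).factorial
        = (m + 1 + a).factorial + (m + 1) * (m + a).factorial := by
          rw [show 2 * (m + 1) + (a + 1) - 1 = (m + a + 1) + (m + 1) by omega,
            show m + 1 + (a + 1) - 2 = m + a by omega, show m + 1 + a = m + a + 1 by omega,
            Nat.factorial_succ (m + a)]
          ring
      _ = _ := by
          rw [← hfac₁, ← hfac₂, Nat.factorial_succ m, show m + 1 + a = m + a + 1 by omega]
          ring
  rw [Mdim, hnum, Nat.add_sub_cancel, Nat.mul_div_cancel _ (by positivity)]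

lemma Mdim_add_two_zero (b : ℕ) : Mdim (b + 2) 0 = 1 := by
  rw [Mdim, show 2 * 0 + (b + 2) - 1 = b + 1 by omega, show 0 + (b + 2) - 2 = b by omega,
    show b + 2 - 1 = b + 1 by omega, ← Nat.factorial_succ, Nat.factorial_zero, mul_one,
    Nat.div_self (Nat.factorial_pos _)]

lemma Mdim_zero_add_three (m : ℕ) : Mdim 0 (m + 3) = 0 := by
  refine Nat.div_eq_of_lt ?_
  rw [show 2 * (m + 3) + 0 - 1 = 2 * m + 5 by omega, show m + 3 + 0 - 2 = m + 1 by omega,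
    Nat.zero_sub, Nat.factorial_zero, one_mul, Nat.factorial_succ (m + 2),
    Nat.factorial_succ (m + 1), ← mul_assoc]
  exact Nat.mul_lt_mul_of_pos_right (by nlinarith) (Nat.factorial_pos _)

lemma Mdim_add_two_succ (b t : ℕ) :
    Mdim (b + 2) (t + 1) = Mdim (b + 2) t + Mdim (b + 1) (t + 1) := by
  rcases t with _ | m
  · rw [Mdim_succ_succ, Mdim_succ_succ, Mdim_add_two_zero]
    simp only [zero_add, Nat.choose_succ_self_right, Nat.choose_self]
    omega
  · rw [Mdim_succ_succ, Mdim_succ_succ, Mdim_succ_succ,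
      show m + 1 + (b + 1) + 1 = m + b + 1 + 1 + 1 by omega,
      show m + 1 + (b + 1) = m + b + 1 + 1 by omega, show m + (b + 1) + 1 = m + b + 1 + 1 by omega,
      show m + 1 + b + 1 = m + b + 1 + 1 by omega, show m + (b + 1) = m + b + 1 by omega,
      show m + 1 + b = m + b + 1 by omega, Nat.choose_succ_succ' (m + b + 1 + 1) b,
      Nat.choose_succ_succ' (m + b + 1) b]
    ring

lemma sum_range_Mdim_zero_le_two (t : ℕ) : ∑ ℓ ∈ range (t + 1), Mdim 0 ℓ ≤ 2 :=
  calc ∑ ℓ ∈ range (t + 1), Mdim 0 ℓ ≤ ∑ ℓ ∈ range 3, Mdim 0 ℓ := by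
        refine Finset.sum_le_sum_of_ne_zero fun ℓ _ hℓ => Finset.mem_range.mpr ?_
        by_contra! h
        obtain ⟨m, rfl⟩ : ∃ m, ℓ = m + 3 := ⟨ℓ - 3, by omega⟩
        exact hℓ (Mdim_zero_add_three m)
    _ = 2 := by decide

-- For `d = 0` the closed formula for `Mdim` degenerates (`Mdim 0 0 = 0`, `Mdim 0 ℓ = 0` for
-- `ℓ ≥ 3`), so the recursion `Mdim_add_two_succ` is only available for `d ≥ 1`.
lemma sum_range_Mdim_le (d t : ℕ) : ∑ ℓ ∈ range (t + 1), Mdim d ℓ ≤ Mdim (d + 1) t := by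
  rcases d with _ | a
  · rcases t with _ | n
    · decide
    · simpa [Mdim_succ_succ] using sum_range_Mdim_zero_le_two (n + 1)
  · induction t with
    | zero =>
      rcases a with _ | b
      · decide
      · simp [Mdim_add_two_zero]
    | succ n ih =>
      rw [Finset.sum_range_succ, Mdim_add_two_succ]
      exact Nat.add_le_add_right ih _

section HarmonicIndex

variable {d t : ℕ}

lemma HIdx.eq_iff {p q : HIdx d t} : p = q ↔ p.1.1 = q.1.1 ∧ p.2.1 = q.2.1 := by
  rcases p with ⟨⟨ℓ, hℓ⟩, ⟨k, hk⟩⟩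
  rcases q with ⟨⟨ℓ', hℓ'⟩, ⟨k', hk'⟩⟩
  constructor
  · rintro ⟨⟩; exact ⟨rfl, rfl⟩
  · rintro ⟨rfl, rfl⟩; rfl

lemma sum_HIdx {M : Type*} [AddCommMonoid M] (F : ℕ → ℕ → M) :
    ∑ p : HIdx d t, F p.1 p.2 = ∑ ℓ ∈ range (t + 1), ∑ k ∈ range (Mdim d ℓ), F ℓ k := by
  rw [← Finset.univ_sigma_univ, Finset.sum_sigma,
    ← Fin.sum_univ_eq_sum_range (fun ℓ => ∑ k ∈ range (Mdim d ℓ), F ℓ k)]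
  exact Finset.sum_congr rfl fun ℓ _ => Fin.sum_univ_eq_sum_range (F ℓ) _

lemma card_HIdx : Fintype.card (HIdx d t) = ∑ ℓ ∈ range (t + 1), Mdim d ℓ := by
  rw [Fintype.card_sigma]
  simp only [Fintype.card_fin]
  exact Fin.sum_univ_eq_sum_range _ _

lemma IsONBHarmonics.isPtOrthonormalBasis {Y : ℕ → ℕ → Sd d → ℝ} (hY : IsONBHarmonics d t Y) :
    IsPtOrthonormalBasis d t fun p : HIdx d t => Y p.1 p.2 where
  isPt p := (hY.poly p.1 (Nat.lt_succ_iff.mp p.1.2) p.2 p.2.2).mono (Nat.lt_succ_iff.mp p.1.2)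
  integral_mul p q := by
    rw [hY.ortho _ (Nat.lt_succ_iff.mp p.1.2) _ (Nat.lt_succ_iff.mp q.1.2) _ p.2.2 _ q.2.2]
    exact if_congr HIdx.eq_iff.symm rfl rfl
  exists_coeff f hf := by
    obtain ⟨c, hc⟩ := hY.span f hf
    exact ⟨fun p => c p.1 p.2, fun x => by rw [hc x, sum_HIdx fun ℓ k => c ℓ k * Y ℓ k x]⟩

end HarmonicIndex

section GramMatrix

variable {d t N : ℕ} {Y : ℕ → ℕ → Sd d → ℝ} {X : Fin N → Sd d}

lemma Gmat_apply (j m : Fin N) :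
    Gmat d t N Y X j m = ∑ p : HIdx d t, Y p.1 p.2 (X j) * Y p.1 p.2 (X m) := by
  simp [Gmat, Ymat, Matrix.mul_apply]

lemma Gmat_mulVec_one_apply (j : Fin N) :
    (Gmat d t N Y X *ᵥ fun _ => 1) j = ∑ m, Gmat d t N Y X j m := by
  simp [Matrix.mulVec, dotProduct]

lemma DNt_nonneg : 0 ≤ DNt d t N Y X := by
  unfold DNt
  positivity

lemma DNt_eq_zero_iff_forall_Cvec_eq_zero (hN : 0 < N) :
    DNt d t N Y X = 0 ↔ ∀ i, Cvec d t N Y X i = 0 := by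
  have hfac : omega d ^ 2 / (N : ℝ) ^ 2 ≠ 0 := by
    have := omega_pos d
    have : (0 : ℝ) < N := by exact_mod_cast hN
    positivity
  simp [DNt, hfac, Finset.sum_eq_zero_iff_of_nonneg fun i _ => sq_nonneg (Cvec d t N Y X i)]

lemma forall_Cvec_eq_zero_iff (hN : 0 < N) :
    (∀ i, Cvec d t N Y X i = 0) ↔ ∃ c, ∀ j, (Gmat d t N Y X *ᵥ fun _ => 1) j = c := by
  set g := Gmat d t N Y X *ᵥ fun _ => 1
  constructor
  · intro h
    refine ⟨g ⟨0, hN⟩, fun ⟨j, hj⟩ => ?_⟩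
    rcases j with _ | i
    · rfl
    · exact (sub_eq_zero.mp (h ⟨i, by omega⟩)).symm
  · rintro ⟨c, hc⟩ i
    exact sub_eq_zero.mpr ((hc _).trans (hc _).symm)

lemma DNt_le (hN : 0 < N) {B : ℝ} (hG : ∀ j m, |Gmat d t N Y X j m| ≤ B) :
    DNt d t N Y X ≤ 4 * ((N : ℝ) - 1) * (omega d * B) ^ 2 := by
  have hg : ∀ j, |(Gmat d t N Y X *ᵥ fun _ => 1) j| ≤ N * B := fun j =>
    calc |(Gmat d t N Y X *ᵥ fun _ => 1) j| ≤ ∑ m, |Gmat d t N Y X j m| := by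
          rw [Gmat_mulVec_one_apply]; exact Finset.abs_sum_le_sum_abs _ _
      _ ≤ ∑ _m : Fin N, B := Finset.sum_le_sum fun m _ => hG j m
      _ = N * B := by simp
  have hC : ∀ i, Cvec d t N Y X i ^ 2 ≤ (2 * N * B) ^ 2 := fun i => by
    have hCi : |Cvec d t N Y X i| ≤ 2 * N * B := by
      unfold Cvec
      exact (abs_sub _ _).trans (by linarith [hg ⟨0, by omega⟩, hg ⟨i.1 + 1, by omega⟩])
    exact sq_le_sq' (abs_le.mp hCi).1 (abs_le.mp hCi).2
  have hsum : ∑ i, Cvec d t N Y X i ^ 2 ≤ ((N : ℝ) - 1) * (2 * N * B) ^ 2 :=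
    calc ∑ i, Cvec d t N Y X i ^ 2 ≤ ∑ _i : Fin (N - 1), (2 * N * B) ^ 2 :=
          Finset.sum_le_sum fun i _ => hC i
      _ = ((N : ℝ) - 1) * (2 * N * B) ^ 2 := by simp [Nat.cast_sub hN]
  have hNR : (N : ℝ) ≠ 0 := by exact_mod_cast hN.ne'
  calc DNt d t N Y X ≤ omega d ^ 2 / (N : ℝ) ^ 2 * (((N : ℝ) - 1) * (2 * N * B) ^ 2) :=
        mul_le_mul_of_nonneg_left hsum (by positivity)
    _ = 4 * ((N : ℝ) - 1) * (omega d * B) ^ 2 := by field_simp; ring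

end GramMatrix

theorem DNt_bounds_and_design_iff_general (d t N : ℕ)
    (X : Fin N → Sd d) (Y : ℕ → ℕ → Sd d → ℝ) (hY : IsONBHarmonics d t Y)
    (hfund : IsFundamental d t N X) :
    0 ≤ DNt d t N Y X ∧
      DNt d t N Y X ≤ 4 * ((N : ℝ) - 1) * (Mdim (d + 1) t : ℝ) ^ 2 ∧
      (IsDesign d t N X ↔ DNt d t N Y X = 0) := by
  have hB := hY.isPtOrthonormalBasis
  have hN := hfund.pos
  have hcard : (Fintype.card (HIdx d t) : ℝ) ≤ Mdim (d + 1) t := by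
    exact_mod_cast card_HIdx.trans_le (sum_range_Mdim_le d t)
  have hN1 : (0 : ℝ) ≤ N - 1 := by
    have : (1 : ℝ) ≤ N := by exact_mod_cast hN
    linarith
  refine ⟨DNt_nonneg, ?_, ?_⟩
  · calc DNt d t N Y X
        ≤ 4 * ((N : ℝ) - 1) * (omega d * (Fintype.card (HIdx d t) / omega d)) ^ 2 :=
          DNt_le hN fun j m => by rw [Gmat_apply]; exact hB.abs_sum_mul_le _ _
      _ ≤ 4 * ((N : ℝ) - 1) * (Mdim (d + 1) t : ℝ) ^ 2 := by
          rw [mul_div_cancel₀ _ (omega_pos d).ne']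
          gcongr
  · rw [DNt_eq_zero_iff_forall_Cvec_eq_zero hN, forall_Cvec_eq_zero_iff hN,
      hB.isDesign_iff_exists_forall_sum_eq hfund]
    simp only [Gmat_mulVec_one_apply, Gmat_apply]

/-- `0 ≤ D_{N,t}(X) ≤ 4(N-1)M(d+1,t)²`, and `X` is a spherical `t`-design iff
`D_{N,t}(X) = 0`. -/
theorem DNt_bounds_and_design_iff (d t N : ℕ)
    (hN : ∑ ℓ ∈ range (t + 1), Mdim d ℓ ≤ N)
    (X : Fin N → Sd d) (Y : ℕ → ℕ → Sd d → ℝ) (hY : IsONBHarmonics d t Y)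
    (hfund : IsFundamental d t N X) :
    0 ≤ DNt d t N Y X ∧
      DNt d t N Y X ≤ 4 * ((N : ℝ) - 1) * (Mdim (d + 1) t : ℝ) ^ 2 ∧
      (IsDesign d t N X ↔ DNt d t N Y X = 0) :=
  DNt_bounds_and_design_iff_general d t N X Y hY hfund
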